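/- For the one-hidden-layer network, the dropout Rademacher complexity of dropout of units is at most that of dropout of weights: 𝔑_n(F_W^{(I)}) ≤ 𝔑_n(F_W^{(II)}), where f^{(I)}(w,x,r) = ⟨w^{[1]}, r^{[1]} ⊙ Ψ(w^{[0]}_1,…,w^{[0]}_m, x⊙r^{[0]})⟩ and f^{(II)}(w,x,r) = ⟨w^{[1]}⊙r^{[1]}, Ψ(w^{[0]}_1⊙r^{[0]}_1,…,w^{[0]}_m⊙r^{[0]}_m, x)⟩, with Ψ(v_1,…,v_m,x) = (σ(⟨v_1,x⟩),…,σ(⟨v_m,x⟩)) and all dropout coordinates i.i.d. Bern(ρ). -/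

import Mathlib

open MeasureTheory Finset

noncomputable section

/-- `0/1` dropout mask as a real number. -/
def mask (b : Bool) : ℝ := if b then 1 else 0

/-- Rademacher sign `±1`. -/
def sgn (b : Bool) : ℝ := if b then 1 else -1

/-- Probability of a single `Bern(ρ)` coordinate. -/
def bw (ρ : ℝ) (b : Bool) : ℝ := if b then ρ else 1 - ρ

/-- Empirical dropout Rademacher complexity of a class of functions on
`X × R` indexed by weights `w ∈ WS`, on sample `xs` and dropout variables `rs`.
The expectation over the i.i.d. uniform signs is the average over all `2ⁿ`
sign patterns. -/
def empRadW {Wt X R : Type*} (n : ℕ) (WS : Set Wt)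
    (F : Wt → X → R → ℝ) (xs : Fin n → X) (rs : Fin n → R) : ℝ :=
  (∑ ε : Fin n → Bool,
      sSup {v : ℝ | ∃ w ∈ WS,
        v = (1 / (n : ℝ)) * ∑ i, sgn (ε i) * F w (xs i) (rs i)}) / 2 ^ n

/-- The (expected) dropout Rademacher complexity `𝔑ₙ`: the expectation, over the
i.i.d. sample `xs ~ DXⁿ` and the i.i.d. dropout variables `rs` (each distributed
according to the finite Bernoulli-product law with weights `wt`), of the empirical
dropout Rademacher complexity. -/
def radC {Wt R : Type*} [Fintype R] (n d : ℕ) (DX : Measure (Fin d → ℝ))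
    (WS : Set Wt) (wt : R → ℝ) (F : Wt → (Fin d → ℝ) → R → ℝ) : ℝ :=
  ∫ xs : Fin n → Fin d → ℝ,
      ∑ rs : Fin n → R, (∏ i, wt (rs i)) * empRadW n WS F xs rs
    ∂(Measure.pi fun _ => DX)

/-- Weight class of the one-hidden-layer network with `m` hidden units:
`w = (w⁽¹⁾, w⁽⁰⁾₁,…,w⁽⁰⁾_m)` with `‖w⁽¹⁾‖₁ ≤ B₁` and `‖w⁽⁰⁾ᵢ‖₂ ≤ B₀`. -/
def oneW (m d : ℕ) (B₁ B₀ : ℝ) : Set ((Fin m → ℝ) × (Fin m → Fin d → ℝ)) :=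
  {w | (∑ i, |w.1 i|) ≤ B₁ ∧ ∀ i, Real.sqrt (∑ j, w.2 i j ^ 2) ≤ B₀}

/-- Type (I) dropout (dropout of units) output of the one-hidden-layer network:
`f⁽ᴵ⁾(w,x,r) = ⟨w⁽¹⁾, r⁽¹⁾ ⊙ Ψ(w⁽⁰⁾₁,…,w⁽⁰⁾_m, x⊙r⁽⁰⁾)⟩` with
`Ψ(v₁,…,v_m,x) = (σ⟨v₁,x⟩,…,σ⟨v_m,x⟩)`. -/
def oneFI (m d : ℕ) (σ : ℝ → ℝ) :
    (Fin m → ℝ) × (Fin m → Fin d → ℝ) → (Fin d → ℝ) →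
      (Fin m → Bool) × (Fin d → Bool) → ℝ :=
  fun w x r => ∑ i, w.1 i * (mask (r.1 i) * σ (∑ j, w.2 i j * (x j * mask (r.2 j))))

/-- Type (II) dropout (dropout of weights) output of the one-hidden-layer network:
`f⁽ᴵᴵ⁾(w,x,r) = ⟨w⁽¹⁾⊙r⁽¹⁾, Ψ(w⁽⁰⁾₁⊙r⁽⁰⁾₁,…,w⁽⁰⁾_m⊙r⁽⁰⁾_m, x)⟩`. -/
def oneFII (m d : ℕ) (σ : ℝ → ℝ) :
    (Fin m → ℝ) × (Fin m → Fin d → ℝ) → (Fin d → ℝ) →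
      (Fin m → Bool) × (Fin m → Fin d → Bool) → ℝ :=
  fun w x r => ∑ i, (w.1 i * mask (r.1 i)) * σ (∑ j, (w.2 i j * mask (r.2 i j)) * x j)

/-- Type (III) dropout (dropout of both units and weights) output of the
one-hidden-layer network:
`f⁽ᴵᴵᴵ⁾(w,x,r) = ⟨w⁽¹⁾⊙r⁽¹⁾₁, r⁽¹⁾₂ ⊙ Ψ(w⁽⁰⁾₁⊙r⁽⁰⁾₁,…,w⁽⁰⁾_m⊙r⁽⁰⁾_m, x⊙r⁽⁰⁾_{m+1})⟩`. -/
def oneFIII (m d : ℕ) (σ : ℝ → ℝ) :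
    (Fin m → ℝ) × (Fin m → Fin d → ℝ) → (Fin d → ℝ) →
      (Fin m → Bool) × (Fin m → Bool) × (Fin m → Fin d → Bool) × (Fin d → Bool) → ℝ :=
  fun w x r => ∑ i, (w.1 i * mask (r.1 i)) *
    (mask (r.2.1 i) * σ (∑ j, (w.2 i j * mask (r.2.2.1 i j)) * (x j * mask (r.2.2.2 j))))

/-- Bernoulli product weight of a Type (I) dropout configuration. -/
def wtOneI (m d : ℕ) (ρ : ℝ) (r : (Fin m → Bool) × (Fin d → Bool)) : ℝ :=
  (∏ i, bw ρ (r.1 i)) * ∏ j, bw ρ (r.2 j)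

/-- Bernoulli product weight of a Type (II) dropout configuration. -/
def wtOneII (m d : ℕ) (ρ : ℝ) (r : (Fin m → Bool) × (Fin m → Fin d → Bool)) : ℝ :=
  (∏ i, bw ρ (r.1 i)) * ∏ i, ∏ j, bw ρ (r.2 i j)

/-- Bernoulli product weight of a Type (III) dropout configuration. -/
def wtOneIII (m d : ℕ) (ρ : ℝ)
    (r : (Fin m → Bool) × (Fin m → Bool) × (Fin m → Fin d → Bool) × (Fin d → Bool)) : ℝ :=
  (∏ i, bw ρ (r.1 i)) * (∏ i, bw ρ (r.2.1 i)) *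
    (∏ i, ∏ j, bw ρ (r.2.2.1 i j)) * ∏ j, bw ρ (r.2.2.2 j)

end

/-!
For fixed inputs and Rademacher signs, the network's correlation is `∑ₖ w⁽¹⁾ₖ Tₖ(w⁽⁰⁾ₖ)`, so by
`ℓ¹`–`ℓ^∞` duality its supremum over `W` is `B₁ · maxₖ Gₖ`, where `Gₖ = sup_{‖v‖₂ ≤ B₀} |Tₖ v|`
depends only on the masks seen by unit `k`. With dropout of units all units share one input mask
`c`; with dropout of weights every unit has its own i.i.d. mask. If `F(c)` is the probability that
one unit has `G < t` given its input mask `c`, then `P(maxₖ Gₖ < t)` is `E_c[F(c)^m]` in the first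
case and `(E_c F(c))^m` in the second, so Jensen's inequality orders the distribution functions and
the layer-cake formula orders the expectations.
-/

section FiniteExpectation

variable {Ω : Type*} [Fintype Ω]

noncomputable def weightLT (P X : Ω → ℝ) (t : ℝ) : ℝ :=
  ∑ ω, P ω * if X ω < t then 1 else 0

lemma ite_lt_eq_indicator (c : ℝ) :
    (fun t => if c < t then (1 : ℝ) else 0) = (Set.Ioi c).indicator 1 := by
  ext t; simp [Set.indicator_apply]

lemma integrableOn_Ioo_ite_lt (c lo hi : ℝ) :
    IntegrableOn (fun t => if c < t then (1 : ℝ) else 0) (Set.Ioo lo hi) := by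
  rw [ite_lt_eq_indicator]
  exact (integrableOn_const (by simp)).indicator measurableSet_Ioi

lemma setIntegral_Ioo_ite_lt {lo hi c : ℝ} (hlo : lo ≤ c) (hhi : c ≤ hi) :
    ∫ t in Set.Ioo lo hi, (if c < t then (1 : ℝ) else 0) = hi - c := by
  rw [ite_lt_eq_indicator, setIntegral_indicator measurableSet_Ioi, Set.Ioo_inter_Ioi,
    max_eq_right hlo]
  simp [Real.volume_real_Ioo_of_le hhi]

lemma integrableOn_Ioo_weightLT (P X : Ω → ℝ) (lo hi : ℝ) :
    IntegrableOn (weightLT P X) (Set.Ioo lo hi) :=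
  integrable_finsetSum _ fun ω _ => (integrableOn_Ioo_ite_lt (X ω) lo hi).const_mul (P ω)

lemma sum_mul_eq_sub_integral_weightLT {P X : Ω → ℝ} (hP : ∑ ω, P ω = 1) {lo hi : ℝ}
    (hlo : ∀ ω, lo ≤ X ω) (hhi : ∀ ω, X ω ≤ hi) :
    ∑ ω, P ω * X ω = hi - ∫ t in Set.Ioo lo hi, weightLT P X t := by
  unfold weightLT
  rw [integral_finsetSum _ fun ω _ => (integrableOn_Ioo_ite_lt (X ω) lo hi).const_mul (P ω)]
  simp_rw [integral_const_mul, setIntegral_Ioo_ite_lt (hlo _) (hhi _), mul_sub,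
    Finset.sum_sub_distrib, ← Finset.sum_mul, hP]
  ring

theorem sum_mul_le_sum_mul_of_weightLT_le {Ω' : Type*} [Fintype Ω'] {P X : Ω → ℝ}
    {Q Y : Ω' → ℝ} (hP : ∑ ω, P ω = 1) (hQ : ∑ ω, Q ω = 1)
    (h : ∀ t, weightLT Q Y t ≤ weightLT P X t) :
    ∑ ω, P ω * X ω ≤ ∑ ω, Q ω * Y ω := by
  obtain ⟨lo, hlo⟩ := ((Set.finite_range X).union (Set.finite_range Y)).bddBelow
  obtain ⟨hi, hhi⟩ := ((Set.finite_range X).union (Set.finite_range Y)).bddAbove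
  rw [sum_mul_eq_sub_integral_weightLT hP (lo := lo) (hi := hi)
      (fun ω => hlo (Or.inl ⟨ω, rfl⟩)) (fun ω => hhi (Or.inl ⟨ω, rfl⟩)),
    sum_mul_eq_sub_integral_weightLT hQ (lo := lo) (hi := hi)
      (fun ω => hlo (Or.inr ⟨ω, rfl⟩)) (fun ω => hhi (Or.inr ⟨ω, rfl⟩))]
  exact sub_le_sub_left (setIntegral_mono (integrableOn_Ioo_weightLT Q Y lo hi)
    (integrableOn_Ioo_weightLT P X lo hi) h) hi

end FiniteExpectation

lemma ciSup_lt_iff_of_finite {ι α : Type*} [Finite ι] [Nonempty ι]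
    [ConditionallyCompleteLinearOrder α] {f : ι → α} {a : α} :
    (⨆ i, f i) < a ↔ ∀ i, f i < a := by
  refine ⟨fun h i => (le_ciSup (Finite.bddAbove_range f) i).trans_lt h, fun h => ?_⟩
  obtain ⟨i, hi⟩ := exists_eq_ciSup_of_finite (f := f)
  exact hi ▸ h i

section IndependentCopies

variable {ι Ω : Type*} [Fintype ι] [DecidableEq ι] [Fintype Ω]

lemma weightLT_nonneg {P : Ω → ℝ} (hP : ∀ ω, 0 ≤ P ω) (X : Ω → ℝ) (t : ℝ) :
    0 ≤ weightLT P X t :=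
  Finset.sum_nonneg fun ω _ => mul_nonneg (hP ω) (by split_ifs <;> norm_num)

lemma sum_pi_prod_eq_pow (P : Ω → ℝ) :
    ∑ g : ι → Ω, ∏ k, P (g k) = (∑ ω, P ω) ^ Fintype.card ι := by
  rw [← Fintype.prod_sum (fun _ : ι => P), Finset.prod_const, Finset.card_univ]

lemma sum_pi_prod_eq_one {f : ι → Ω → ℝ} (hf : ∀ i, ∑ ω, f i ω = 1) :
    ∑ g : ι → Ω, ∏ i, f i (g i) = 1 := by
  rw [← Fintype.prod_sum, Finset.prod_eq_one fun i _ => hf i]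

/-- The maximum of independent copies is below `t` iff every copy is. -/
lemma weightLT_pi_iSup [Nonempty ι] (P X : Ω → ℝ) (t : ℝ) :
    weightLT (fun g : ι → Ω => ∏ k, P (g k)) (fun g => ⨆ k, X (g k)) t
      = weightLT P X t ^ Fintype.card ι := by
  unfold weightLT
  rw [← sum_pi_prod_eq_pow]
  refine Finset.sum_congr rfl fun g _ => ?_
  simp only [Finset.prod_mul_distrib, Fintype.prod_boole, ciSup_lt_iff_of_finite]

/-- Read as expectations: the maximum of `H (aₖ, c)` with `aₖ ~ p` i.i.d. and one shared `c ~ q`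
is on average at most the maximum of `H (aₖ, cₖ)` with `cₖ ~ q` drawn independently per copy. -/
theorem sum_iSup_shared_le_sum_iSup_indep {A C : Type*} [Fintype A] [Fintype C]
    {p : A → ℝ} {q : C → ℝ} (hp0 : ∀ a, 0 ≤ p a) (hq0 : ∀ c, 0 ≤ q c)
    (hp : ∑ a, p a = 1) (hq : ∑ c, q c = 1) (H : A → C → ℝ) :
    ∑ x : C × (ι → A), (q x.1 * ∏ k, p (x.2 k)) * ⨆ k, H (x.2 k) x.1
      ≤ ∑ g : ι → A × C, (∏ k, p (g k).1 * q (g k).2) * ⨆ k, H (g k).1 (g k).2 := by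
  cases isEmpty_or_nonempty ι
  · simp
  have hpq : ∑ ac : A × C, p ac.1 * q ac.2 = 1 := by
    rw [Fintype.sum_prod_type, ← Finset.sum_mul_sum, hp, hq, one_mul]
  refine sum_mul_le_sum_mul_of_weightLT_le ?_ ?_ fun t => ?_
  · simp_rw [Fintype.sum_prod_type, ← Finset.mul_sum, sum_pi_prod_eq_pow, hp, one_pow, mul_one,
      hq]
  · rw [sum_pi_prod_eq_pow (fun ac : A × C => p ac.1 * q ac.2), hpq, one_pow]
  -- Conditionally on `c` the copies are independent; Jensen for `x ↦ x ^ card ι` compares.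
  have hshared : weightLT (fun x : C × (ι → A) => q x.1 * ∏ k, p (x.2 k))
      (fun x => ⨆ k, H (x.2 k) x.1) t
        = ∑ c, q c * weightLT p (H · c) t ^ Fintype.card ι := by
    simp_rw [← weightLT_pi_iSup]
    unfold weightLT
    simp_rw [Fintype.sum_prod_type, Finset.mul_sum, mul_assoc]
  have hindep : weightLT (fun ac : A × C => p ac.1 * q ac.2) (fun ac => H ac.1 ac.2) t
      = ∑ c, q c * weightLT p (H · c) t := by
    unfold weightLT
    rw [Fintype.sum_prod_type, Finset.sum_comm]
    simp_rw [Finset.mul_sum]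
    exact Finset.sum_congr rfl fun c _ => Finset.sum_congr rfl fun a _ => by ring
  rw [hshared, weightLT_pi_iSup (fun ac : A × C => p ac.1 * q ac.2) (fun ac => H ac.1 ac.2),
    hindep]
  exact Real.pow_arith_mean_le_arith_mean_pow _ q _ (fun c _ => hq0 c) hq
    (fun c _ => weightLT_nonneg hp0 _ t) _

end IndependentCopies

/-- `ℓ¹`–`ℓ^∞` duality. -/
theorem sSup_sum_mul_eq_mul_iSup {ι V : Type*} [Fintype ι] {B : ℝ} (hB : 0 ≤ B) {s : Set V}
    (hs : s.Nonempty) (T : ι → V → ℝ) (hT : ∀ k, BddAbove ((fun v => |T k v|) '' s)) :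
    sSup {u | ∃ w ∈ {w : (ι → ℝ) × (ι → V) | ∑ k, |w.1 k| ≤ B ∧ ∀ k, w.2 k ∈ s},
        u = ∑ k, w.1 k * T k (w.2 k)}
      = B * ⨆ k, sSup ((fun v => |T k v|) '' s) := by
  set S := {u | ∃ w ∈ {w : (ι → ℝ) × (ι → V) | ∑ k, |w.1 k| ≤ B ∧ ∀ k, w.2 k ∈ s},
    u = ∑ k, w.1 k * T k (w.2 k)}
  set G := fun k => sSup ((fun v => |T k v|) '' s)
  obtain ⟨v₀, hv₀⟩ := id hs
  have hGM : ∀ k, G k ≤ ⨆ k, G k := le_ciSup (Finite.bddAbove_range G)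
  have hM : 0 ≤ ⨆ k, G k :=
    Real.iSup_nonneg fun k => Real.sSup_nonneg (by rintro _ ⟨v, -, rfl⟩; exact abs_nonneg _)
  have hzero : (0 : ℝ) ∈ S := ⟨(0, fun _ => v₀), ⟨by simpa using hB, fun _ => hv₀⟩, by simp⟩
  have hupper : ∀ u ∈ S, u ≤ B * ⨆ k, G k := by
    rintro _ ⟨w, ⟨hw₁, hw₂⟩, rfl⟩
    calc ∑ k, w.1 k * T k (w.2 k) ≤ ∑ k, |w.1 k| * ⨆ k, G k := by
          refine Finset.sum_le_sum fun k _ => (le_abs_self _).trans ?_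
          rw [abs_mul]
          gcongr
          exact (le_csSup (hT k) ⟨w.2 k, hw₂ k, rfl⟩).trans (hGM k)
      _ ≤ B * ⨆ k, G k := by rw [← Finset.sum_mul]; gcongr
  have hbdd : BddAbove S := ⟨_, hupper⟩
  refine le_antisymm (csSup_le ⟨0, hzero⟩ hupper) ?_
  cases isEmpty_or_nonempty ι
  · simpa using le_csSup hbdd hzero
  obtain ⟨k₀, hk₀⟩ := exists_eq_ciSup_of_finite (f := G)
  rw [← hk₀, ← smul_eq_mul, ← Real.sSup_smul_of_nonneg hB]
  refine csSup_le_csSup hbdd (hs.image _).smul_set ?_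
  rintro _ ⟨_, ⟨v, hv, rfl⟩, rfl⟩
  -- put all the weight `±B` on unit `k₀`, with the sign of `T k₀ v`
  obtain ⟨c, hc, hcT⟩ : ∃ c, |c| = B ∧ c * T k₀ v = B * |T k₀ v| := by
    rcases abs_choice (T k₀ v) with h | h
    · exact ⟨B, abs_of_nonneg hB, by rw [h]⟩
    · exact ⟨-B, by rw [abs_neg, abs_of_nonneg hB], by rw [h]; ring⟩
  classical
  refine ⟨(Pi.single k₀ c, fun _ => v), ⟨?_, fun _ => hv⟩, ?_⟩
  · simp [Pi.single_apply, apply_ite abs, hc]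
  · simp [Pi.single_apply, hcT]

lemma isCompact_setOf_sqrt_sum_sq_le {ι : Type*} [Fintype ι] (r : ℝ) :
    IsCompact {v : ι → ℝ | Real.sqrt (∑ j, v j ^ 2) ≤ r} := by
  refine Metric.isCompact_of_isClosed_isBounded (isClosed_le (by fun_prop) continuous_const)
    ((Metric.isBounded_closedBall (x := 0) (r := r)).subset fun v hv => ?_)
  refine mem_closedBall_zero_iff.2 <|
    (pi_norm_le_iff_of_nonneg ((Real.sqrt_nonneg _).trans hv)).2 fun j => ?_
  exact (Real.abs_le_sqrt (Finset.single_le_sum (fun i _ => sq_nonneg (v i))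
    (Finset.mem_univ j))).trans hv

lemma sum_prod_bw {ι : Type*} [Fintype ι] [DecidableEq ι] (ρ : ℝ) :
    ∑ α : ι → Bool, ∏ i, bw ρ (α i) = 1 :=
  sum_pi_prod_eq_one fun _ => by simp [bw]

lemma bw_nonneg {ρ : ℝ} (hρ0 : 0 ≤ ρ) (hρ1 : ρ ≤ 1) (b : Bool) : 0 ≤ bw ρ b := by
  cases b <;> simp [bw] <;> linarith

def unitsDropoutEquiv (ι κ X Y : Type*) : (ι → (κ → X) × Y) ≃ (ι → Y) × (κ → ι → X) where
  toFun r := (fun i => (r i).2, fun k i => (r i).1 k)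
  invFun x i := (fun k => x.2 k i, x.1 i)
  left_inv _ := rfl
  right_inv _ := rfl

def weightsDropoutEquiv (ι κ X Y : Type*) :
    (ι → (κ → X) × (κ → Y)) ≃ (κ → (ι → X) × (ι → Y)) where
  toFun r k := (fun i => (r i).1 k, fun i => (r i).2 k)
  invFun x i := (fun k => (x k).1 i, fun k => (x k).2 i)
  left_inv _ := rfl
  right_inv _ := rfl

section OneHiddenLayer

variable {m d n : ℕ}

noncomputable def unitCorr (xs : Fin n → Fin d → ℝ) (σ : ℝ → ℝ) (ε α : Fin n → Bool)
    (β : Fin n → Fin d → Bool) (v : Fin d → ℝ) : ℝ :=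
  1 / (n : ℝ) * ∑ i, sgn (ε i) * (mask (α i) * σ (∑ j, v j * mask (β i j) * xs i j))

noncomputable def unitSup (B₀ : ℝ) (xs : Fin n → Fin d → ℝ) (σ : ℝ → ℝ) (ε α : Fin n → Bool)
    (β : Fin n → Fin d → Bool) : ℝ :=
  sSup ((fun v => |unitCorr xs σ ε α β v|) '' {v | Real.sqrt (∑ j, v j ^ 2) ≤ B₀})

lemma one_div_mul_sum_sgn_oneFI (xs : Fin n → Fin d → ℝ) (σ : ℝ → ℝ) (ε : Fin n → Bool)
    (rs : Fin n → (Fin m → Bool) × (Fin d → Bool)) (w : (Fin m → ℝ) × (Fin m → Fin d → ℝ)) :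
    1 / (n : ℝ) * ∑ i, sgn (ε i) * oneFI m d σ w (xs i) (rs i)
      = ∑ k, w.1 k * unitCorr xs σ ε (fun i => (rs i).1 k) (fun i => (rs i).2) (w.2 k) := by
  simp only [oneFI, unitCorr, Finset.mul_sum]
  rw [Finset.sum_comm]
  refine Finset.sum_congr rfl fun k _ => Finset.sum_congr rfl fun i _ => ?_
  simp only [mul_comm (xs i _) (mask _), ← mul_assoc]
  ring

lemma one_div_mul_sum_sgn_oneFII (xs : Fin n → Fin d → ℝ) (σ : ℝ → ℝ) (ε : Fin n → Bool)
    (rs : Fin n → (Fin m → Bool) × (Fin m → Fin d → Bool))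
    (w : (Fin m → ℝ) × (Fin m → Fin d → ℝ)) :
    1 / (n : ℝ) * ∑ i, sgn (ε i) * oneFII m d σ w (xs i) (rs i)
      = ∑ k, w.1 k * unitCorr xs σ ε (fun i => (rs i).1 k) (fun i => (rs i).2 k) (w.2 k) := by
  simp only [oneFII, unitCorr, Finset.mul_sum]
  rw [Finset.sum_comm]
  exact Finset.sum_congr rfl fun k _ => Finset.sum_congr rfl fun i _ => by ring

lemma empRadW_oneW_eq {B₁ B₀ : ℝ} (hB₁ : 0 ≤ B₁) (hB₀ : 0 ≤ B₀) {σ : ℝ → ℝ}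
    (hσ : Continuous σ) {R : Type*}
    (F : (Fin m → ℝ) × (Fin m → Fin d → ℝ) → (Fin d → ℝ) → R → ℝ)
    (xs : Fin n → Fin d → ℝ) (rs : Fin n → R) (α : Fin m → Fin n → Bool)
    (β : Fin m → Fin n → Fin d → Bool)
    (hF : ∀ ε w, 1 / (n : ℝ) * ∑ i, sgn (ε i) * F w (xs i) (rs i)
      = ∑ k, w.1 k * unitCorr xs σ ε (α k) (β k) (w.2 k)) :
    empRadW n (oneW m d B₁ B₀) F xs rs
      = B₁ / 2 ^ n * ∑ ε, ⨆ k, unitSup B₀ xs σ ε (α k) (β k) := by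
  have hsup (ε : Fin n → Bool) : sSup {v | ∃ w ∈ oneW m d B₁ B₀,
      v = 1 / (n : ℝ) * ∑ i, sgn (ε i) * F w (xs i) (rs i)}
        = B₁ * ⨆ k, unitSup B₀ xs σ ε (α k) (β k) := by
    simp_rw [hF ε]
    refine sSup_sum_mul_eq_mul_iSup hB₁ (s := {v : Fin d → ℝ | Real.sqrt (∑ j, v j ^ 2) ≤ B₀})
      ⟨0, by simpa using hB₀⟩ _ fun k => ?_
    exact (isCompact_setOf_sqrt_sum_sq_le B₀).bddAbove_image (by unfold unitCorr; fun_prop)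
  unfold empRadW
  simp_rw [hsup, ← Finset.mul_sum]
  ring

lemma sum_wtOneI_mul_iSup_le_sum_wtOneII_mul_iSup {ρ : ℝ} (hρ0 : 0 ≤ ρ) (hρ1 : ρ ≤ 1)
    (H : (Fin n → Bool) → (Fin n → Fin d → Bool) → ℝ) :
    ∑ rs : Fin n → (Fin m → Bool) × (Fin d → Bool),
        (∏ i, wtOneI m d ρ (rs i)) * ⨆ k, H (fun i => (rs i).1 k) (fun i => (rs i).2)
      ≤ ∑ rs : Fin n → (Fin m → Bool) × (Fin m → Fin d → Bool),
        (∏ i, wtOneII m d ρ (rs i)) * ⨆ k, H (fun i => (rs i).1 k) (fun i => (rs i).2 k) := by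
  let p : (Fin n → Bool) → ℝ := fun α => ∏ i, bw ρ (α i)
  let q : (Fin n → Fin d → Bool) → ℝ := fun β => ∏ i, ∏ j, bw ρ (β i j)
  have hshared := Fintype.sum_equiv (unitsDropoutEquiv (Fin n) (Fin m) Bool (Fin d → Bool))
    (fun rs => (∏ i, wtOneI m d ρ (rs i)) * ⨆ k, H (fun i => (rs i).1 k) (fun i => (rs i).2))
    (fun x => (q x.1 * ∏ k, p (x.2 k)) * ⨆ k, H (x.2 k) x.1) fun rs => by
      simp only [wtOneI, Finset.prod_mul_distrib, unitsDropoutEquiv, Equiv.coe_fn_mk, p, q]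
      rw [Finset.prod_comm (s := Finset.univ (α := Fin n)), mul_comm (∏ k, _)]
  have hindep := Fintype.sum_equiv
    (weightsDropoutEquiv (Fin n) (Fin m) Bool (Fin d → Bool))
    (fun rs => (∏ i, wtOneII m d ρ (rs i)) * ⨆ k, H (fun i => (rs i).1 k) (fun i => (rs i).2 k))
    (fun g => (∏ k, p (g k).1 * q (g k).2) * ⨆ k, H (g k).1 (g k).2) fun rs => by
      simp only [wtOneII, Finset.prod_mul_distrib, weightsDropoutEquiv, Equiv.coe_fn_mk, p, q]
      rw [Finset.prod_comm (s := Finset.univ (α := Fin n)),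
        Finset.prod_comm (s := Finset.univ (α := Fin n)) (t := Finset.univ (α := Fin m))]
  rw [hshared, hindep]
  exact sum_iSup_shared_le_sum_iSup_indep
    (fun α => Finset.prod_nonneg fun i _ => bw_nonneg hρ0 hρ1 _)
    (fun β => Finset.prod_nonneg fun i _ => Finset.prod_nonneg fun j _ => bw_nonneg hρ0 hρ1 _)
    (sum_prod_bw ρ) (sum_pi_prod_eq_one fun _ => sum_prod_bw ρ) H

lemma sum_wtOneI_mul_empRadW_le {ρ B₁ B₀ : ℝ} (hρ0 : 0 ≤ ρ) (hρ1 : ρ ≤ 1) (hB₁ : 0 ≤ B₁)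
    (hB₀ : 0 ≤ B₀) {σ : ℝ → ℝ} (hσ : Continuous σ) (xs : Fin n → Fin d → ℝ) :
    ∑ rs : Fin n → (Fin m → Bool) × (Fin d → Bool),
        (∏ i, wtOneI m d ρ (rs i)) * empRadW n (oneW m d B₁ B₀) (oneFI m d σ) xs rs
      ≤ ∑ rs : Fin n → (Fin m → Bool) × (Fin m → Fin d → Bool),
        (∏ i, wtOneII m d ρ (rs i)) * empRadW n (oneW m d B₁ B₀) (oneFII m d σ) xs rs := by
  simp_rw [fun rs => empRadW_oneW_eq hB₁ hB₀ hσ _ xs rs _ _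
      (one_div_mul_sum_sgn_oneFI xs σ · rs),
    fun rs => empRadW_oneW_eq hB₁ hB₀ hσ _ xs rs _ _ (one_div_mul_sum_sgn_oneFII xs σ · rs),
    Finset.mul_sum, mul_left_comm _ (B₁ / 2 ^ n)]
  conv_lhs => rw [Finset.sum_comm]
  conv_rhs => rw [Finset.sum_comm]
  gcongr with ε
  simp only [← Finset.mul_sum]
  gcongr
  exact sum_wtOneI_mul_iSup_le_sum_wtOneII_mul_iSup hρ0 hρ1 _

end OneHiddenLayer

theorem one_hidden_rad_units_le_weights_general (m d n : ℕ)
    (ρ B₁ B₀ L : ℝ) (hρ0 : 0 ≤ ρ) (hρ1 : ρ ≤ 1)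
    (hB₁ : 0 ≤ B₁) (hB₀ : 0 ≤ B₀)
    (σ : ℝ → ℝ) (hσ : ∀ a b : ℝ, |σ a - σ b| ≤ L * |a - b|)
    (DX : Measure (Fin d → ℝ))
    (hint₁ : Integrable
      (fun xs : Fin n → Fin d → ℝ =>
        ∑ rs : Fin n → (Fin m → Bool) × (Fin d → Bool),
          (∏ i, wtOneI m d ρ (rs i)) * empRadW n (oneW m d B₁ B₀) (oneFI m d σ) xs rs)
      (Measure.pi fun _ => DX))
    (hint₂ : Integrable
      (fun xs : Fin n → Fin d → ℝ =>
        ∑ rs : Fin n → (Fin m → Bool) × (Fin m → Fin d → Bool),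
          (∏ i, wtOneII m d ρ (rs i)) * empRadW n (oneW m d B₁ B₀) (oneFII m d σ) xs rs)
      (Measure.pi fun _ => DX)) :
    radC n d DX (oneW m d B₁ B₀) (wtOneI m d ρ) (oneFI m d σ)
      ≤ radC n d DX (oneW m d B₁ B₀) (wtOneII m d ρ) (oneFII m d σ) := by
  have hσc : Continuous σ := (LipschitzWith.of_dist_le' (K := L) fun a b => by
    simpa only [Real.dist_eq] using hσ a b).continuous
  exact integral_mono hint₁ hint₂ fun xs => sum_wtOneI_mul_empRadW_le hρ0 hρ1 hB₁ hB₀ hσc xs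

/-- For the one-hidden-layer network, the dropout Rademacher
complexity of dropout of units is at most that of dropout of weights:
`𝔑ₙ(F_W^{(I)}) ≤ 𝔑ₙ(F_W^{(II)})`. -/
theorem one_hidden_rad_units_le_weights (m d n : ℕ) (hn : 0 < n)
    (ρ B₁ B₀ Bhat L : ℝ) (hρ0 : 0 ≤ ρ) (hρ1 : ρ ≤ 1)
    (hB₁ : 0 ≤ B₁) (hB₀ : 0 ≤ B₀) (hBhat : 0 ≤ Bhat) (hL : 0 ≤ L)
    (σ : ℝ → ℝ) (hσ : ∀ a b : ℝ, |σ a - σ b| ≤ L * |a - b|) (hσ0 : σ 0 = 0)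
    (DX : Measure (Fin d → ℝ)) [IsProbabilityMeasure DX]
    (hsupp : ∀ᵐ x ∂DX, Real.sqrt (∑ j, x j ^ 2) ≤ Bhat)
    (hint₁ : Integrable
      (fun xs : Fin n → Fin d → ℝ =>
        ∑ rs : Fin n → (Fin m → Bool) × (Fin d → Bool),
          (∏ i, wtOneI m d ρ (rs i)) * empRadW n (oneW m d B₁ B₀) (oneFI m d σ) xs rs)
      (Measure.pi fun _ => DX))
    (hint₂ : Integrable
      (fun xs : Fin n → Fin d → ℝ =>
        ∑ rs : Fin n → (Fin m → Bool) × (Fin m → Fin d → Bool),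
          (∏ i, wtOneII m d ρ (rs i)) * empRadW n (oneW m d B₁ B₀) (oneFII m d σ) xs rs)
      (Measure.pi fun _ => DX)) :
    radC n d DX (oneW m d B₁ B₀) (wtOneI m d ρ) (oneFI m d σ)
      ≤ radC n d DX (oneW m d B₁ B₀) (wtOneII m d ρ) (oneFII m d σ) :=
  one_hidden_rad_units_le_weights_general m d n ρ B₁ B₀ L hρ0 hρ1 hB₁ hB₀ σ hσ DX hint₁ hint₂
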